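/- arXiv:1104.0713 — 2 statements merged into one kernel-verified Lean document; each statement's English description precedes it below -/
import Mathlib

section
/- Let Δ* be a group with exactly three subgroups Δ0, Δ1, Δ2 of index 2, and let G be a finite group with a unique subgroup H of index 2. If L is a normal subgroup of Δ* with Δ*/L ≅ G and L ≤ Δ0, then setting K = Δ1 ∩ L we have K = Δ2 ∩ L, K is normal in Δ*, Δ*/K ≅ G × C2, and Δi/K ≅ G for i = 1, 2. -/
open Subgroup

open Classical in
noncomputable def chiHom {D : Type*} [Group D] (Δ : Subgroup D) (h : Δ.index = 2) :
    D →* Multiplicative (ZMod 2) :=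
  MonoidHom.mk' (fun d => if d ∈ Δ then 1 else Multiplicative.ofAdd 1) (by
    intro a b
    by_cases ha : a ∈ Δ <;> by_cases hb : b ∈ Δ <;>
      simp [Subgroup.mul_mem_iff_of_index_two h, ha, hb] <;> decide)

open Classical in
lemma chiHom_apply {D : Type*} [Group D] (Δ : Subgroup D) (h : Δ.index = 2) (d : D) :
    chiHom Δ h d = if d ∈ Δ then 1 else Multiplicative.ofAdd 1 := rfl

lemma ker_chiHom {D : Type*} [Group D] (Δ : Subgroup D) (h : Δ.index = 2) :
    (chiHom Δ h).ker = Δ := by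
  ext x
  rw [MonoidHom.mem_ker, chiHom_apply]
  by_cases hx : x ∈ Δ <;> simp [hx] <;> decide

lemma eq_of_le_of_index_two {D : Type*} [Group D] {A B : Subgroup D} (hAB : A ≤ B)
    (hA : A.index = 2) (hB : B.index = 2) : A = B := by
  have := Subgroup.relIndex_mul_index hAB
  rw [hA, hB] at this
  have h1 : A.relIndex B = 1 := by omega
  exact le_antisymm hAB (Subgroup.relIndex_eq_one.mp h1)

theorem stmt1 {D : Type*} [Group D] {G : Type*} [Group G] [Finite G]
    (Δ0 Δ1 Δ2 : Subgroup D)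
    (hne01 : Δ0 ≠ Δ1) (hne02 : Δ0 ≠ Δ2) (hne12 : Δ1 ≠ Δ2)
    (hthree : {H : Subgroup D | H.index = 2} = {Δ0, Δ1, Δ2})
    (H : Subgroup G) (hH : H.index = 2) (hHuniq : ∀ H' : Subgroup G, H'.index = 2 → H' = H)
    (L : Subgroup D) (π : D →* G) (hπ : Function.Surjective π) (hker : π.ker = L)
    (hL0 : L ≤ Δ0) :
    Δ1 ⊓ L = Δ2 ⊓ L ∧
    (Δ1 ⊓ L).Normal ∧
    (∃ φ : D →* G × Multiplicative (ZMod 2),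
        Function.Surjective φ ∧ φ.ker = Δ1 ⊓ L) ∧
    (∃ φ1 : Δ1 →* G,
        Function.Surjective φ1 ∧ φ1.ker = (Δ1 ⊓ L).subgroupOf Δ1) ∧
    (∃ φ2 : Δ2 →* G,
        Function.Surjective φ2 ∧ φ2.ker = (Δ1 ⊓ L).subgroupOf Δ2) := by
  have hmem : ∀ A : Subgroup D, A.index = 2 ↔ (A = Δ0 ∨ A = Δ1 ∨ A = Δ2) := by
    intro A
    constructor
    · intro h
      have : A ∈ {H : Subgroup D | H.index = 2} := h
      rw [hthree] at this
      simpa using this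
    · intro hA
      have : A ∈ ({Δ0, Δ1, Δ2} : Set (Subgroup D)) := by
        rcases hA with rfl | rfl | rfl <;> simp
      rw [← hthree] at this
      exact this
  have h0 : Δ0.index = 2 := (hmem Δ0).mpr (Or.inl rfl)
  have h1 : Δ1.index = 2 := (hmem Δ1).mpr (Or.inr (Or.inl rfl))
  have h2 : Δ2.index = 2 := (hmem Δ2).mpr (Or.inr (Or.inr rfl))
  -- Δ0 is the preimage of H
  have hmap : ∀ A : Subgroup D, A.index = 2 → L ≤ A → A = H.comap π := by
    intro A hA hLA
    have hkA : π.ker ≤ A := hker ▸ hLA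
    have : (A.map π).index = 2 := by rw [A.index_map_eq hπ hkA]; exact hA
    have hAH : A.map π = H := hHuniq _ this
    have := Subgroup.comap_map_eq π A
    rw [hAH, hker, sup_of_le_left hLA] at this
    exact this.symm
  have hΔ0 : Δ0 = H.comap π := hmap Δ0 h0 hL0
  -- L is not contained in Δ1 or Δ2
  have hnL : ∀ A : Subgroup D, A.index = 2 → A ≠ Δ0 → ¬ L ≤ A := by
    intro A hA hne hle
    exact hne ((hmap A hA hle).trans hΔ0.symm)
  have hnL1 : ¬ L ≤ Δ1 := hnL Δ1 h1 (Ne.symm hne01)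
  have hnL2 : ¬ L ≤ Δ2 := hnL Δ2 h2 (Ne.symm hne02)
  -- characters
  set χ1 := chiHom Δ1 h1 with hχ1
  set χ2 := chiHom Δ2 h2 with hχ2
  -- the product character has kernel Δ0
  have hZcomm : ∀ a b : Multiplicative (ZMod 2), a * b = b * a := by decide
  set χ12 : D →* Multiplicative (ZMod 2) :=
    MonoidHom.mk' (fun d => χ1 d * χ2 d) (by
      intro a b
      simp only [map_mul]
      rw [mul_assoc, ← mul_assoc (χ1 b), hZcomm (χ1 b) (χ2 a), mul_assoc, mul_assoc]) with hχ12
  have hker12 : ∀ d : D, d ∈ χ12.ker ↔ (d ∈ Δ1 ↔ d ∈ Δ2) := by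
    intro d
    rw [MonoidHom.mem_ker]
    show χ1 d * χ2 d = 1 ↔ _
    rw [hχ1, hχ2, chiHom_apply, chiHom_apply]
    by_cases hd1 : d ∈ Δ1 <;> by_cases hd2 : d ∈ Δ2 <;> simp [hd1, hd2] <;> decide
  -- elements separating Δ1 and Δ2
  have hx12 : ∃ x, x ∈ Δ1 ∧ x ∉ Δ2 := by
    by_contra hcon
    push_neg at hcon
    exact hne12 (eq_of_le_of_index_two hcon h1 h2)
  have hx21 : ∃ x, x ∈ Δ2 ∧ x ∉ Δ1 := by
    by_contra hcon
    push_neg at hcon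
    exact hne12 (eq_of_le_of_index_two hcon h2 h1).symm
  obtain ⟨x, hx1, hx2⟩ := hx12
  obtain ⟨y, hy2, hy1⟩ := hx21
  have hker12ind : χ12.ker.index = 2 := by
    rw [Subgroup.index_ker]
    have hrange : χ12.range = ⊤ := by
      rw [eq_top_iff]
      rintro t -
      by_cases ht : t = 1
      · exact ⟨1, by simp [ht]⟩
      · refine ⟨x, ?_⟩
        have hxk : ¬ (x ∈ Δ1 ↔ x ∈ Δ2) := by simp [hx1, hx2]
        have : χ12 x ≠ 1 := fun hc => hxk ((hker12 x).mp hc)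
        show χ12 x = t
        revert this ht
        generalize χ12 x = a
        revert t a
        decide
    rw [hrange, Subgroup.card_top]
    simp [Nat.card_eq_fintype_card]
  have hk0 : χ12.ker = Δ0 := by
    rcases (hmem _).mp hker12ind with h | h | h
    · exact h
    · exfalso
      have hxk : x ∈ χ12.ker := by rw [h]; exact hx1
      exact hx2 (((hker12 x).mp hxk).mp hx1)
    · exfalso
      have hyk : y ∈ χ12.ker := by rw [h]; exact hy2
      exact hy1 (((hker12 y).mp hyk).mpr hy2)
  -- membership in Δ0 relates Δ1 and Δ2
  have hΔ0iff : ∀ d : D, d ∈ Δ0 ↔ (d ∈ Δ1 ↔ d ∈ Δ2) := fun d => by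
    rw [← hk0]; exact hker12 d
  -- Part 1
  have part1 : Δ1 ⊓ L = Δ2 ⊓ L := by
    ext d
    simp only [Subgroup.mem_inf]
    constructor
    · rintro ⟨hd1, hdL⟩
      exact ⟨((hΔ0iff d).mp (hL0 hdL)).mp hd1, hdL⟩
    · rintro ⟨hd2, hdL⟩
      exact ⟨((hΔ0iff d).mp (hL0 hdL)).mpr hd2, hdL⟩
  -- the product map φ
  set φ : D →* G × Multiplicative (ZMod 2) := π.prod χ1 with hφ
  have hkerφ : φ.ker = Δ1 ⊓ L := by
    rw [hφ, MonoidHom.ker_prod, hker, hχ1, ker_chiHom, inf_comm]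
  have part2 : (Δ1 ⊓ L).Normal := hkerφ ▸ φ.normal_ker
  -- surjectivity of φ
  obtain ⟨l, hlL, hl1⟩ : ∃ l, l ∈ L ∧ l ∉ Δ1 := by
    by_contra hcon; push_neg at hcon; exact hnL1 hcon
  have hχ1l : χ1 l = Multiplicative.ofAdd 1 := by
    rw [hχ1, chiHom_apply]; simp [hl1]
  have hπl : π l = 1 := by rw [← MonoidHom.mem_ker, hker]; exact hlL
  have hφsurj : Function.Surjective φ := by
    rintro ⟨g, t⟩
    obtain ⟨d, hd⟩ := hπ g
    by_cases hdt : χ1 d = t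
    · exact ⟨d, by simp [hφ, MonoidHom.prod_apply, hd, hdt]⟩
    · refine ⟨d * l, ?_⟩
      have : χ1 d * Multiplicative.ofAdd 1 = t := by
        revert hdt; generalize χ1 d = a; revert a t; decide
      simp [hφ, MonoidHom.prod_apply, map_mul, hd, hπl, hχ1l, this]
  -- restriction maps
  haveI : L.Normal := hker ▸ π.normal_ker
  have hsup : ∀ A : Subgroup D, A.index = 2 → ¬ L ≤ A → A ⊔ L = ⊤ := by
    intro A hA hnLA
    have hdvd : (A ⊔ L).index ∣ 2 := hA ▸ Subgroup.index_dvd_of_le le_sup_left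
    rcases (Nat.dvd_prime Nat.prime_two).mp hdvd with h | h
    · exact Subgroup.index_eq_one.mp h
    · exact absurd (eq_of_le_of_index_two le_sup_left hA h)
        (fun he => hnLA (he ▸ le_sup_right))
  have hrestrict : ∀ A : Subgroup D, A.index = 2 → ¬ L ≤ A →
      ∃ ψ : A →* G, Function.Surjective ψ ∧ ψ.ker = L.subgroupOf A := by
    intro A hA hnLA
    refine ⟨π.comp A.subtype, ?_, ?_⟩
    · intro g
      obtain ⟨d, hd⟩ := hπ g
      have hdtop : d ∈ A ⊔ L := (hsup A hA hnLA) ▸ Subgroup.mem_top d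
      rw [← SetLike.mem_coe, Subgroup.mul_normal] at hdtop
      obtain ⟨a, ha, n, hn, han⟩ := hdtop
      refine ⟨⟨a, ha⟩, ?_⟩
      have hπn : π n = 1 := by rw [← MonoidHom.mem_ker, hker]; exact hn
      show π a = g
      rw [← hd, ← han, map_mul, hπn, mul_one]
    · rw [← MonoidHom.comap_ker, hker]; rfl
  obtain ⟨ψ1, hψ1s, hψ1k⟩ := hrestrict Δ1 h1 hnL1
  obtain ⟨ψ2, hψ2s, hψ2k⟩ := hrestrict Δ2 h2 hnL2
  refine ⟨part1, part2, ⟨φ, hφsurj, hkerφ⟩, ⟨ψ1, hψ1s, ?_⟩, ⟨ψ2, hψ2s, ?_⟩⟩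
  · rw [hψ1k, Subgroup.inf_subgroupOf_left]
  · rw [hψ2k, part1, Subgroup.inf_subgroupOf_left]
end

section
/- Let a, b, c be generators of a group G with relations: ⟨a,b⟩ ≅ C_{2n} × C_n abelian with a of order 2n and b of order n, c an involution with b^c = b and a^c = a^{-1}b^{-1}. Then the center of G is Z = ⟨a^n, b⟩ ≅ C2 × C_n, the subgroup D = ⟨a²b, c⟩ is dihedral of order 2n, and if n is odd then G = Z × D ≅ C_{2n} × D_n, while if n is even then Z ∩ D = ⟨a^n b^{n/2}⟩ ≅ C2 and ZD has index 2 in G. -/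
open Pointwise

private lemma aux_pow_add {G : Type*} [Group G] (u : G) (m : ℕ) [NeZero m]
    (h : orderOf u = m) (x y : ZMod m) : u ^ (x + y).val = u ^ x.val * u ^ y.val := by
  subst h; rw [ZMod.val_add, pow_mod_orderOf, pow_add]

private lemma aux_zpow_cast {G : Type*} [Group G] (u : G) (m : ℕ) [NeZero m]
    (h : orderOf u = m) (k : ℤ) : u ^ (((k : ZMod m)).val : ℤ) = u ^ k := by
  rw [zpow_eq_zpow_iff_modEq, h]
  apply (ZMod.intCast_eq_intCast_iff _ _ _).mp
  simp [ZMod.natCast_val, ZMod.cast_id]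

/-- Structure of the group `G = (C_{2n} × C_n) ⋊ C₂ = ⟨a,b,c⟩` where `a` has order `2n`,
`b` has order `n`, `a` and `b` commute and generate `C_{2n} × C_n`, and `c` is an
involution with `bᶜ = b` and `aᶜ = a⁻¹b⁻¹`: the centre is `Z = ⟨aⁿ, b⟩ ≅ C₂ × C_n`,
`D = ⟨a²b, c⟩` is dihedral of order `2n`; if `n` is odd then `G = Z × D ≅ C_{2n} × D_n`,
while if `n` is even then `Z ∩ D = ⟨aⁿb^{n/2}⟩ ≅ C₂` and `ZD` has index 2 in `G`. -/
theorem stmt17 (n : ℕ) (hn : 3 ≤ n) (G : Type*) [Group G] (a b c : G)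
    (ha : orderOf a = 2*n) (hb : orderOf b = n) (hab : Commute a b)
    (hdisj : Subgroup.closure {a} ⊓ Subgroup.closure {b} = ⊥)
    (hc : orderOf c = 2)
    (hcb : c * b * c⁻¹ = b) (hca : c * a * c⁻¹ = a⁻¹ * b⁻¹)
    (hgen : Subgroup.closure {a, b, c} = (⊤ : Subgroup G))
    (hcard : Nat.card G = 4*n^2) :
    Subgroup.center G = Subgroup.closure {a^n, b} ∧
    Nonempty ((Subgroup.closure {a^n, b} : Subgroup G) ≃*
        Multiplicative (ZMod 2) × Multiplicative (ZMod n)) ∧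
    Nonempty ((Subgroup.closure {a^2*b, c} : Subgroup G) ≃* DihedralGroup n) ∧
    Nat.card (Subgroup.closure {a^2*b, c} : Subgroup G) = 2*n ∧
    (Odd n →
      Subgroup.closure {a^n, b} ⊓ Subgroup.closure {a^2*b, c} = ⊥ ∧
      Subgroup.closure {a^n, b} ⊔ Subgroup.closure {a^2*b, c} = ⊤ ∧
      Nonempty (G ≃* Multiplicative (ZMod (2*n)) × DihedralGroup n)) ∧
    (Even n →
      Subgroup.closure {a^n, b} ⊓ Subgroup.closure {a^2*b, c} =
          Subgroup.closure {a^n * b^(n/2)} ∧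
      Nat.card (Subgroup.closure {a^n * b^(n/2)} : Subgroup G) = 2 ∧
      (Subgroup.closure {a^n, b} ⊔ Subgroup.closure {a^2*b, c}).index = 2) := by
  haveI : NeZero n := ⟨by omega⟩
  haveI : Fact (1 < n) := ⟨by omega⟩
  haveI : Finite G := Nat.finite_of_card_ne_zero (by rw [hcard]; positivity)
  set Zs := Subgroup.closure {a^n, b} with hZs_def
  set d := a^2*b with hd_def
  set Ds := Subgroup.closure {d, c} with hDs_def
  -- basic facts
  have ha2n : a ^ (2*n) = 1 := by rw [← ha]; exact pow_orderOf_eq_one a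
  have hbn : b ^ n = 1 := by rw [← hb]; exact pow_orderOf_eq_one b
  have hc2 : c * c = 1 := by
    have := pow_orderOf_eq_one c; rwa [hc, pow_two] at this
  have hcinv : c⁻¹ = c := by rw [inv_eq_iff_mul_eq_one, hc2]
  have hkey : ∀ (i j : ℤ), a ^ i = b ^ j → a ^ i = 1 ∧ b ^ j = 1 := by
    intro i j hij
    have h1 : a ^ i ∈ Subgroup.closure {a} ⊓ Subgroup.closure {b} := by
      refine Subgroup.mem_inf.mpr ⟨?_, ?_⟩
      · exact Subgroup.zpow_mem _ (Subgroup.subset_closure (Set.mem_singleton a)) i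
      · rw [hij]; exact Subgroup.zpow_mem _ (Subgroup.subset_closure (Set.mem_singleton b)) j
    rw [hdisj, Subgroup.mem_bot] at h1
    exact ⟨h1, hij ▸ h1⟩
  have hadvd : ∀ i : ℤ, a ^ i = 1 ↔ ((2*n : ℕ) : ℤ) ∣ i := by
    intro i; rw [← orderOf_dvd_iff_zpow_eq_one, ha]
  have hbdvd : ∀ j : ℤ, b ^ j = 1 ↔ ((n : ℕ) : ℤ) ∣ j := by
    intro j; rw [← orderOf_dvd_iff_zpow_eq_one, hb]
  -- conjugation facts
  have hσazpow : ∀ i : ℤ, c * a ^ i * c⁻¹ = a ^ (-i) * b ^ (-i) := by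
    intro i
    have h1 : c * a ^ i * c⁻¹ = (c * a * c⁻¹) ^ i := by
      simpa using map_zpow (MulAut.conj c) a i
    rw [h1, hca, (hab.inv_inv).mul_zpow, inv_zpow', inv_zpow']
  have hσbzpow : ∀ j : ℤ, c * b ^ j * c⁻¹ = b ^ j := by
    intro j
    have h1 : c * b ^ j * c⁻¹ = (c * b * c⁻¹) ^ j := by
      simpa using map_zpow (MulAut.conj c) b j
    rw [h1, hcb]
  -- normal form multiplication
  have hmulform : ∀ (i j k l : ℤ), (a^i*b^j) * (a^k*b^l) = a^(i+k) * b^(j+l) := by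
    intro i j k l
    rw [((hab.symm.zpow_zpow j k)).mul_mul_mul_comm (a^i) (b^l), ← zpow_add, ← zpow_add]
  -- A := closure {a, b}
  have haA : a ∈ Subgroup.closure ({a, b} : Set G) :=
    Subgroup.subset_closure (Set.mem_insert _ _)
  have hbA : b ∈ Subgroup.closure ({a, b} : Set G) :=
    Subgroup.subset_closure (Set.mem_insert_of_mem _ (Set.mem_singleton _))
  have hAform : ∀ x ∈ Subgroup.closure ({a, b} : Set G), ∃ i j : ℤ, x = a ^ i * b ^ j := by
    intro x hx
    refine Subgroup.closure_induction (p := fun x _ => ∃ i j : ℤ, x = a^i * b^j) ?_ ?_ ?_ ?_ hx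
    · intro x hx
      rcases hx with rfl | hx
      · exact ⟨1, 0, by simp⟩
      · rcases hx with rfl
        exact ⟨0, 1, by simp⟩
    · exact ⟨0, 0, by simp⟩
    · rintro x y _ _ ⟨i, j, rfl⟩ ⟨k, l, rfl⟩
      exact ⟨i+k, j+l, hmulform i j k l⟩
    · rintro x _ ⟨i, j, rfl⟩
      refine ⟨-i, -j, ?_⟩
      rw [mul_inv_rev, ← zpow_neg, ← zpow_neg, ((hab.symm).zpow_zpow (-j) (-i)).eq]
  have hσA : ∀ x ∈ Subgroup.closure ({a, b} : Set G),
      c * x * c⁻¹ ∈ Subgroup.closure ({a, b} : Set G) := by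
    intro x hx
    obtain ⟨i, j, rfl⟩ := hAform x hx
    have h1 : c * (a^i * b^j) * c⁻¹ = (c * a^i * c⁻¹) * (c * b^j * c⁻¹) := by group
    rw [h1, hσazpow, hσbzpow]
    exact mul_mem (mul_mem (Subgroup.zpow_mem _ haA _) (Subgroup.zpow_mem _ hbA _))
      (Subgroup.zpow_mem _ hbA _)
  -- decomposition g ∈ A or g*c ∈ A
  have hdecomp : ∀ g : G, g ∈ Subgroup.closure ({a, b} : Set G) ∨
      g * c ∈ Subgroup.closure ({a, b} : Set G) := by
    set A := Subgroup.closure ({a, b} : Set G) with hA_def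
    let T : Subgroup G :=
      { carrier := {g | g ∈ A ∨ g * c ∈ A}
        one_mem' := Or.inl (one_mem A)
        mul_mem' := by
          rintro x y (hx | hx) (hy | hy)
          · exact Or.inl (mul_mem hx hy)
          · exact Or.inr (by rw [mul_assoc]; exact mul_mem hx hy)
          · refine Or.inr ?_
            have h1 : (x*y)*c = (x*c) * (c⁻¹ * (y * c)) := by group
            have h2 : c⁻¹ * (y * c) = c * y * c⁻¹ := by rw [hcinv]; group
            rw [h1, h2]
            exact mul_mem hx (hσA y hy)
          · refine Or.inl ?_
            have h1 : x * y = (x*c) * (c⁻¹ * (y * c) * c⁻¹) := by group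
            have h2 : c⁻¹ * (y*c) * c⁻¹ = c * (y*c) * c⁻¹ := by rw [hcinv]
            rw [h1, h2]
            exact mul_mem hx (hσA _ hy)
        inv_mem' := by
          rintro x (hx | hx)
          · exact Or.inl (inv_mem hx)
          · refine Or.inr ?_
            have h1 : x⁻¹ * c = c * (x*c)⁻¹ * c⁻¹ := by rw [hcinv]; group
            rw [h1]
            exact hσA _ (inv_mem hx) }
    have hT : Subgroup.closure ({a, b, c} : Set G) ≤ T := by
      rw [Subgroup.closure_le]
      intro g hg
      rcases hg with h | h | h
      · rw [h]; exact Or.inl haA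
      · rw [h]; exact Or.inl hbA
      · rw [h]; exact Or.inr (by rw [hc2]; exact one_mem A)
    intro g
    exact hT (by rw [hgen]; trivial)
  -- center: Z ≤ center
  have hcomm_center : ∀ z : G, Commute a z → Commute b z → Commute c z →
      z ∈ Subgroup.center G := by
    intro z h1 h2 h3
    rw [Subgroup.mem_center_iff]
    intro g
    have hg : g ∈ Subgroup.closure ({a, b, c} : Set G) := by rw [hgen]; trivial
    refine Subgroup.closure_induction (p := fun g _ => g * z = z * g) ?_ ?_ ?_ ?_ hg
    · intro g hg
      rcases hg with h | h | h
      · rw [h]; exact h1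
      · rw [h]; exact h2
      · rw [h]; exact h3
    · exact Commute.one_left z
    · intro x y _ _ hx hy; exact Commute.mul_left hx hy
    · intro x _ hx; exact Commute.inv_left hx
  have hann : a^n * a^n = 1 := by rw [← pow_add, ← two_mul]; exact ha2n
  have hσan : c * a^n * c⁻¹ = a^n := by
    have h1 : c * a^n * c⁻¹ = a^(-(n:ℤ)) * b^(-(n:ℤ)) := by
      rw [← zpow_natCast a n]; exact hσazpow n
    have h2 : b^(-(n:ℤ)) = 1 := by rw [zpow_neg, zpow_natCast, hbn, inv_one]
    have h3 : a^(-(n:ℤ)) = a^n := by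
      rw [zpow_neg, zpow_natCast]; exact inv_eq_of_mul_eq_one_left hann
    rw [h1, h2, h3, mul_one]
  have hZ_le_center : Zs ≤ Subgroup.center G := by
    rw [hZs_def, Subgroup.closure_le]
    intro g hg
    rcases hg with h | h
    · rw [h]
      refine hcomm_center _ ((Commute.refl a).pow_right n) ((hab.symm).pow_right n) ?_
      show c * a^n = a^n * c
      conv_rhs => rw [← hσan]
      group
    · rw [Set.mem_singleton_iff] at h
      rw [h]
      refine hcomm_center _ hab (Commute.refl b) ?_
      show c * b = b * c
      conv_rhs => rw [← hcb]
      group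
  have hconj_a_ne : ¬ (c * a * c⁻¹ = a) := by
    intro h
    rw [hca] at h
    have hb1 : b⁻¹ = a * a := by
      calc b⁻¹ = a * (a⁻¹ * b⁻¹) := by group
      _ = a * a := by rw [h]
    have h2 : a ^ (2:ℤ) = b ^ (-1:ℤ) := by
      rw [zpow_neg, zpow_one, hb1, show (2:ℤ) = 1 + 1 by norm_num, zpow_add, zpow_one]
    obtain ⟨h1, _⟩ := hkey 2 (-1) h2
    rw [hadvd] at h1
    have h3 : (2*n : ℕ) ∣ 2 := by exact_mod_cast h1
    have := Nat.le_of_dvd (by norm_num) h3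
    omega
  have hcenter : Subgroup.center G = Zs := by
    apply le_antisymm _ hZ_le_center
    intro z hz
    rcases hdecomp z with hzA | hzc
    · obtain ⟨i, j, rfl⟩ := hAform z hzA
      have hcz : c * (a^i * b^j) * c⁻¹ = a^i * b^j := by
        have h0 := (Subgroup.mem_center_iff.mp hz) c
        calc c * (a^i * b^j) * c⁻¹ = (a^i * b^j) * c * c⁻¹ := congrArg (· * c⁻¹) h0
        _ = a^i * b^j := by group
      have hL : c * (a^i*b^j) * c⁻¹ = a^(-i) * (b^(-i) * b^j) := by
        have e : c * (a^i * b^j) * c⁻¹ = (c*a^i*c⁻¹)*(c*b^j*c⁻¹) := by group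
        rw [e, hσazpow, hσbzpow, mul_assoc]
      have h1 : a^i = a^(-i) * b^(-i) := by
        have h0 : a^i * b^j = a^(-i) * (b^(-i) * b^j) := by rw [← hL, hcz]
        rw [← mul_assoc] at h0
        exact mul_right_cancel h0
      have heq : a^(2*i) = b^(-i) := by
        have h2 : a^i * a^i = a^i * (a^(-i) * b^(-i)) := by rw [← h1]
        calc a^(2*i) = a^i * a^i := by rw [two_mul, zpow_add]
        _ = a^i * (a^(-i) * b^(-i)) := h2
        _ = b^(-i) := by group
      obtain ⟨h3, h4⟩ := hkey (2*i) (-i) heq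
      rw [hadvd] at h3
      have h5 : ((n:ℕ):ℤ) ∣ i := by
        obtain ⟨t, ht⟩ := h3
        refine ⟨t, ?_⟩
        push_cast at ht ⊢
        linarith
      obtain ⟨t, rfl⟩ := h5
      have h6 : a^((n:ℤ)*t) = (a^n)^t := by rw [zpow_mul, zpow_natCast]
      rw [h6]
      exact mul_mem (Subgroup.zpow_mem _ (Subgroup.subset_closure (Set.mem_insert _ _)) t)
        (Subgroup.zpow_mem _ (Subgroup.subset_closure (Set.mem_insert_of_mem _ (Set.mem_singleton _))) j)
    · exfalso
      obtain ⟨i, j, hij⟩ := hAform _ hzc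
      apply hconj_a_ne
      have hzeq : z = a^i * b^j * c⁻¹ := by rw [← hij]; group
      have hcomm : a * (a^i * b^j) = (a^i * b^j) * a :=
        (((Commute.refl a).zpow_right i).mul_right (hab.zpow_right j)).eq
      have h6 := (Subgroup.mem_center_iff.mp hz) a
      rw [hzeq] at h6
      -- h6 : a * (a^i * b^j * c⁻¹) = a^i * b^j * c⁻¹ * a
      have h7 : a * c⁻¹ = c⁻¹ * a := by
        have h8 : (a^i * b^j) * (a * c⁻¹) = (a^i * b^j) * (c⁻¹ * a) := by
          calc (a^i * b^j) * (a * c⁻¹) = (a * (a^i * b^j)) * c⁻¹ := by rw [hcomm]; group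
          _ = a * (a^i * b^j * c⁻¹) := by group
          _ = a^i * b^j * c⁻¹ * a := h6
          _ = (a^i * b^j) * (c⁻¹ * a) := by group
        exact mul_left_cancel h8
      calc c * a * c⁻¹ = c * (a * c⁻¹) := by group
      _ = c * (c⁻¹ * a) := by rw [h7]
      _ = a := by group
  -- order of a^n
  have horda2 : orderOf (a^n) = 2 := by
    rw [orderOf_pow, ha, Nat.gcd_eq_right ⟨2, by ring⟩, Nat.mul_div_cancel _ (by omega : 0 < n)]
  -- the homomorphism F onto Z
  let F : Multiplicative (ZMod 2) × Multiplicative (ZMod n) →* G :=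
    { toFun := fun p => (a^n) ^ (p.1.toAdd.val) * b ^ (p.2.toAdd.val)
      map_one' := by simp
      map_mul' := by
        rintro ⟨x, y⟩ ⟨x', y'⟩
        show (a^n) ^ ((x*x').toAdd.val) * b ^ ((y*y').toAdd.val) = _
        rw [toAdd_mul, toAdd_mul, aux_pow_add (a^n) 2 horda2, aux_pow_add b n hb]
        exact ((hab.pow_left n).pow_pow _ _).mul_mul_mul_comm _ _ }
  have hFinj : Function.Injective F := by
    refine (injective_iff_map_eq_one F).mpr ?_
    rintro ⟨x, y⟩ hxy
    have hxy' : (a^n) ^ (x.toAdd.val) * b ^ (y.toAdd.val) = 1 := hxy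
    have h1 : (a^n) ^ x.toAdd.val = (b ^ y.toAdd.val)⁻¹ := eq_inv_of_mul_eq_one_left hxy'
    have h2 : a ^ ((n * x.toAdd.val : ℕ) : ℤ) = b ^ (-(y.toAdd.val : ℤ)) := by
      rw [zpow_natCast, pow_mul, zpow_neg, zpow_natCast]
      exact h1
    obtain ⟨h3, h4⟩ := hkey _ _ h2
    rw [zpow_natCast, pow_mul] at h3
    have h5 : x.toAdd.val = 0 := by
      have hdv : 2 ∣ x.toAdd.val := by
        have := orderOf_dvd_of_pow_eq_one h3
        rwa [horda2] at this
      have := ZMod.val_lt x.toAdd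
      omega
    have h6 : y.toAdd.val = 0 := by
      rw [zpow_neg, inv_eq_one, zpow_natCast] at h4
      have hdv : n ∣ y.toAdd.val := by
        have := orderOf_dvd_of_pow_eq_one h4
        rwa [hb] at this
      exact Nat.eq_zero_of_dvd_of_lt hdv (ZMod.val_lt y.toAdd)
    have hx1 : x = 1 := by
      have : x.toAdd = 0 := by
        rwa [ZMod.val_eq_zero] at h5
      exact Multiplicative.toAdd.injective (by rwa [toAdd_one])
    have hy1 : y = 1 := by
      have : y.toAdd = 0 := by
        rwa [ZMod.val_eq_zero] at h6
      exact Multiplicative.toAdd.injective (by rwa [toAdd_one])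
    rw [Prod.mk_eq_one]
    exact ⟨hx1, hy1⟩
  have hFrange : F.range = Zs := by
    apply le_antisymm
    · rintro g ⟨⟨x, y⟩, rfl⟩
      exact mul_mem (Subgroup.pow_mem _ (Subgroup.subset_closure (Set.mem_insert _ _)) _)
        (Subgroup.pow_mem _ (Subgroup.subset_closure
          (Set.mem_insert_of_mem _ (Set.mem_singleton _))) _)
    · rw [hZs_def, Subgroup.closure_le]
      intro g hg
      rcases hg with h | h
      · rw [h]
        refine ⟨(Multiplicative.ofAdd (1 : ZMod 2), 1), ?_⟩
        show (a^n) ^ ((Multiplicative.ofAdd (1 : ZMod 2)).toAdd.val) *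
          b ^ ((1 : Multiplicative (ZMod n)).toAdd.val) = a^n
        simp [ZMod.val_one]
      · rw [Set.mem_singleton_iff] at h; rw [h]
        refine ⟨(1, Multiplicative.ofAdd (1 : ZMod n)), ?_⟩
        show (a^n) ^ ((1 : Multiplicative (ZMod 2)).toAdd.val) *
          b ^ ((Multiplicative.ofAdd (1 : ZMod n)).toAdd.val) = b
        simp [ZMod.val_one]
  have eZ : (Zs : Subgroup G) ≃* Multiplicative (ZMod 2) × Multiplicative (ZMod n) :=
    ((MonoidHom.ofInjective hFinj).trans (MulEquiv.subgroupCongr hFrange)).symm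
  have hcardZ : Nat.card Zs = 2*n := by
    rw [Nat.card_congr eZ.toEquiv, Nat.card_prod, Nat.card_congr Multiplicative.toAdd,
      Nat.card_congr Multiplicative.toAdd, Nat.card_zmod, Nat.card_zmod]
  -- the dihedral subgroup D
  have hdpow : ∀ k : ℕ, d^k = a^(2*k) * b^k := by
    intro k
    rw [hd_def, (hab.pow_left 2).mul_pow, ← pow_mul]
  have hdn : d ^ n = 1 := by rw [hdpow, ha2n, hbn, one_mul]
  have horderd : orderOf d = n := by
    have h2 : orderOf d ∣ n := orderOf_dvd_of_pow_eq_one hdn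
    have h3 : n ∣ orderOf d := by
      have hd1 : d ^ orderOf d = 1 := pow_orderOf_eq_one d
      rw [hdpow] at hd1
      have h4 : a^((2*orderOf d : ℕ):ℤ) = b^(-(orderOf d:ℤ)) := by
        rw [zpow_natCast, zpow_neg, zpow_natCast]
        exact eq_inv_of_mul_eq_one_left hd1
      obtain ⟨_, h5⟩ := hkey _ _ h4
      rw [hbdvd] at h5
      have h6 : ((n:ℕ):ℤ) ∣ (orderOf d : ℤ) := dvd_neg.mp h5
      exact_mod_cast h6
    exact Nat.dvd_antisymm h2 h3
  have hdc1 : c * d * c⁻¹ = d⁻¹ := by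
    have e1 : c * d * c⁻¹ = (c*a^(2:ℤ)*c⁻¹) * (c*b^(1:ℤ)*c⁻¹) := by
      rw [hd_def]; group
    rw [e1, hσazpow, hσbzpow]
    refine eq_inv_of_mul_eq_one_left ?_
    have e3 : a^(-2:ℤ) * b^(-2:ℤ) * b^(1:ℤ) = a^(-2:ℤ) * b^(-1:ℤ) := by
      rw [mul_assoc, ← zpow_add]; norm_num
    rw [e3, hd_def, show (a^2*b : G) = a^(2:ℤ)*b^(1:ℤ) by rw [zpow_one]; norm_cast, hmulform]
    norm_num
  have hcdk : ∀ k : ℤ, c * d^k * c⁻¹ = d^(-k) := by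
    intro k
    have h1 : c * d ^ k * c⁻¹ = (c * d * c⁻¹) ^ k := by
      simpa using map_zpow (MulAut.conj c) d k
    rw [h1, hdc1, inv_zpow']
  have hswap : ∀ k : ℤ, c * d^k = d^(-k) * c := by
    intro k
    conv_rhs => rw [← hcdk k]
    group
  have hdcast : ∀ k : ℤ, d ^ (((k : ZMod n)).val : ℤ) = d ^ k := fun k =>
    aux_zpow_cast d n horderd k
  let φ : DihedralGroup n →* G :=
    { toFun := fun x => match x with
        | .r i => d ^ ((i.val : ℤ))
        | .sr i => c * d ^ ((i.val : ℤ))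
      map_one' := by
        show d ^ (((0 : ZMod n)).val : ℤ) = 1
        rw [ZMod.val_zero]; norm_num
      map_mul' := by
        rintro (i | i) (j | j) <;>
          obtain ⟨x, rfl⟩ := ZMod.intCast_surjective i <;>
          obtain ⟨y, rfl⟩ := ZMod.intCast_surjective j
        · show d ^ ((((x:ZMod n) + (y:ZMod n)).val : ℤ)) =
            d ^ (((x:ZMod n)).val:ℤ) * d ^ (((y:ZMod n)).val:ℤ)
          rw [show ((x:ZMod n) + (y:ZMod n)) = ((x + y : ℤ) : ZMod n) by push_cast; ring]
          rw [hdcast, hdcast, hdcast, zpow_add]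
        · show c * d ^ ((((y:ZMod n) - (x:ZMod n)).val : ℤ)) =
            d ^ (((x:ZMod n)).val:ℤ) * (c * d ^ (((y:ZMod n)).val:ℤ))
          rw [show ((y:ZMod n) - (x:ZMod n)) = ((y - x : ℤ) : ZMod n) by push_cast; ring]
          rw [hdcast, hdcast, hdcast, hswap (y-x), show -(y-x) = x + -y by ring,
            hswap y, ← mul_assoc, ← zpow_add]
        · show c * d ^ ((((x:ZMod n) + (y:ZMod n)).val : ℤ)) =
            (c * d ^ (((x:ZMod n)).val:ℤ)) * d ^ (((y:ZMod n)).val:ℤ)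
          rw [show ((x:ZMod n) + (y:ZMod n)) = ((x + y : ℤ) : ZMod n) by push_cast; ring]
          rw [hdcast, hdcast, hdcast, zpow_add, ← mul_assoc]
        · show d ^ ((((y:ZMod n) - (x:ZMod n)).val : ℤ)) =
            (c * d ^ (((x:ZMod n)).val:ℤ)) * (c * d ^ (((y:ZMod n)).val:ℤ))
          rw [show ((y:ZMod n) - (x:ZMod n)) = ((y - x : ℤ) : ZMod n) by push_cast; ring]
          rw [hdcast, hdcast, hdcast, hswap x]
          calc d ^ (y - x) = d^(-x) * ((c * c) * d^y) := by rw [hc2]; group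
          _ = d^(-x) * c * (c * d^y) := by group }
  have hφinj : Function.Injective φ := by
    refine (injective_iff_map_eq_one φ).mpr ?_
    rintro (i | i) h1
    · have h2 : d ^ ((i.val : ℤ)) = 1 := h1
      rw [zpow_natCast] at h2
      have h3 : n ∣ i.val := by
        have := orderOf_dvd_of_pow_eq_one h2
        rwa [horderd] at this
      have h4 : i.val = 0 := Nat.eq_zero_of_dvd_of_lt h3 (ZMod.val_lt i)
      show DihedralGroup.r i = 1
      rw [DihedralGroup.one_def]
      congr 1
      rwa [ZMod.val_eq_zero] at h4
    · exfalso
      have h2 : c * d ^ ((i.val:ℤ)) = 1 := h1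
      have h3 : c = (d ^ ((i.val:ℤ)))⁻¹ := eq_inv_of_mul_eq_one_left h2
      have h4 : c * d * c⁻¹ = d := by rw [h3]; group
      rw [hdc1] at h4
      have h5 : d * d = 1 := by
        calc d * d = d * d⁻¹ := by rw [h4]
        _ = 1 := mul_inv_cancel d
      have h6 : orderOf d ∣ 2 := orderOf_dvd_of_pow_eq_one (by rw [pow_two]; exact h5)
      rw [horderd] at h6
      have := Nat.le_of_dvd (by norm_num) h6
      omega
  have hφrange : φ.range = Ds := by
    apply le_antisymm
    · rintro g ⟨x, rfl⟩
      cases x with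
      | r i =>
        show d ^ ((i.val : ℤ)) ∈ Ds
        exact Subgroup.zpow_mem _ (Subgroup.subset_closure (Set.mem_insert _ _)) _
      | sr i =>
        show c * d ^ ((i.val : ℤ)) ∈ Ds
        refine mul_mem ?_ (Subgroup.zpow_mem _ (Subgroup.subset_closure (Set.mem_insert _ _)) _)
        exact Subgroup.subset_closure (Set.mem_insert_of_mem _ (Set.mem_singleton _))
    · refine (Subgroup.closure_le _).mpr ?_
      intro g hg
      rcases hg with h | h
      · rw [h]
        refine ⟨DihedralGroup.r 1, ?_⟩
        show d ^ (((1 : ZMod n)).val : ℤ) = d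
        rw [ZMod.val_one]
        norm_num
      · rw [Set.mem_singleton_iff] at h; rw [h]
        refine ⟨DihedralGroup.sr 0, ?_⟩
        show c * d ^ (((0 : ZMod n)).val : ℤ) = c
        rw [ZMod.val_zero]; norm_num
  have eD : (Ds : Subgroup G) ≃* DihedralGroup n :=
    ((MonoidHom.ofInjective hφinj).trans (MulEquiv.subgroupCongr hφrange)).symm
  have hcardD : Nat.card Ds = 2*n := by
    rw [Nat.card_congr eD.toEquiv]; exact DihedralGroup.nat_card
  -- classification of elements of D and of Z ⊓ D
  have hDform : ∀ x ∈ Ds, (∃ k : ℤ, x = d^k) ∨ (∃ k : ℤ, x = c * d^k) := by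
    intro x hx
    rw [← hφrange] at hx
    obtain ⟨y, rfl⟩ := hx
    cases y with
    | r i => exact Or.inl ⟨(i.val : ℤ), rfl⟩
    | sr i => exact Or.inr ⟨(i.val : ℤ), rfl⟩
  have hinf : ∀ x ∈ Zs ⊓ Ds, ∃ k : ℤ, x = d^k ∧ ((n:ℕ):ℤ) ∣ 2*k := by
    intro x hx
    obtain ⟨hxZ, hxD⟩ := Subgroup.mem_inf.mp hx
    have hxc : x ∈ Subgroup.center G := by rw [hcenter]; exact hxZ
    rcases hDform x hxD with ⟨k, rfl⟩ | ⟨k, rfl⟩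
    · refine ⟨k, rfl, ?_⟩
      have h1 : c * d^k * c⁻¹ = d^k := by
        have h0 := (Subgroup.mem_center_iff.mp hxc) c
        calc c * d^k * c⁻¹ = (d^k * c) * c⁻¹ := by rw [h0]
        _ = d^k := by group
      rw [hcdk] at h1
      have h2 : d ^ (2*k) = 1 := by
        calc d^(2*k) = d^k * d^k := by rw [two_mul, zpow_add]
        _ = d^k * d^(-k) := by rw [h1]
        _ = 1 := by group
      have h3 := orderOf_dvd_iff_zpow_eq_one.mpr h2
      rwa [horderd] at h3
    · exfalso
      have h1 := (Subgroup.mem_center_iff.mp hxc) a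
      apply hconj_a_ne
      have hcomm_ad : a * d^k = d^k * a := by
        have h0 : Commute a d := by
          rw [hd_def]; exact ((Commute.refl a).pow_right 2).mul_right hab
        exact (h0.zpow_right k).eq
      have h2 : (a * c) * d^k = (c * a) * d^k := by
        calc (a*c)*d^k = a * (c * d^k) := by group
        _ = (c * d^k) * a := h1
        _ = c * (d^k * a) := by group
        _ = c * (a * d^k) := by rw [← hcomm_ad]
        _ = (c*a)*d^k := by group
      have h3 : a * c = c * a := mul_right_cancel h2
      rw [← h3]
      exact mul_inv_cancel_right a c
  -- the multiplication homomorphism Z × D → G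
  have hZnormal : Zs.Normal := by rw [← hcenter]; infer_instance
  let ψ : Zs × Ds →* G :=
    { toFun := fun p => (p.1 : G) * (p.2 : G)
      map_one' := by simp
      map_mul' := by
        rintro ⟨z1, d1⟩ ⟨z2, d2⟩
        show ((z1 * z2 : Zs) : G) * ((d1 * d2 : Ds) : G) = ((z1:G) * d1) * ((z2:G) * d2)
        push_cast
        have hz2c : (z2 : G) ∈ Subgroup.center G := by rw [hcenter]; exact z2.2
        have hcm : Commute (z2 : G) (d1 : G) :=
          Commute.symm ((Subgroup.mem_center_iff.mp hz2c) (d1:G))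
        exact hcm.mul_mul_mul_comm _ _ }
  haveI := hZnormal
  have hψrange : ψ.range = Zs ⊔ Ds := by
    apply le_antisymm
    · rintro g ⟨⟨z, w⟩, rfl⟩
      exact mul_mem (Subgroup.mem_sup_left z.2) (Subgroup.mem_sup_right w.2)
    · intro x hx
      have hx2 : x ∈ (Zs : Set G) * (Ds : Set G) := by
        rw [← Subgroup.normal_mul]
        exact hx
      obtain ⟨z, hz, w, hw, rfl⟩ := hx2
      exact ⟨(⟨z, hz⟩, ⟨w, hw⟩), rfl⟩
  refine ⟨hcenter, ⟨eZ⟩, ⟨eD⟩, hcardD, fun hodd => ?_, fun heven => ?_⟩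
  · -- odd case
    have hZDbot : Zs ⊓ Ds = ⊥ := by
      rw [eq_bot_iff]
      intro x hx
      obtain ⟨k, rfl, hdvd⟩ := hinf x hx
      have hnodd : Nat.Coprime n 2 := Nat.coprime_two_right.mpr hodd
      have h1 : ((n:ℕ):ℤ) ∣ k := by
        have h2 : n ∣ (2*k).natAbs := Int.natCast_dvd.mp hdvd
        rw [Int.natAbs_mul] at h2
        have h3 : n ∣ k.natAbs * 2 := by
          rw [mul_comm]
          simpa using h2
        have h4 : n ∣ k.natAbs := Nat.Coprime.dvd_of_dvd_mul_right hnodd h3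
        exact Int.natCast_dvd.mpr h4
      obtain ⟨t, rfl⟩ := h1
      have : d ^ ((n:ℤ)*t) = 1 := by rw [zpow_mul, zpow_natCast, hdn, one_zpow]
      simpa [Subgroup.mem_bot] using this
    have hZDtop : Zs ⊔ Ds = ⊤ := by
      rw [eq_top_iff, ← hgen]
      rw [Subgroup.closure_le]
      have hbsup : b ∈ Zs ⊔ Ds := Subgroup.mem_sup_left
        (Subgroup.subset_closure (Set.mem_insert_of_mem _ (Set.mem_singleton _)))
      have hcsup : c ∈ Zs ⊔ Ds := Subgroup.mem_sup_right
        (Subgroup.subset_closure (Set.mem_insert_of_mem _ (Set.mem_singleton _)))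
      have ha2sup : a^2 ∈ Zs ⊔ Ds := by
        have h1 : a^2 = d * b⁻¹ := by rw [hd_def]; group
        rw [h1]
        exact mul_mem (Subgroup.mem_sup_right (Subgroup.subset_closure (Set.mem_insert _ _)))
          (inv_mem hbsup)
      intro g hg
      rcases hg with h | h | h
      · rw [h]
        obtain ⟨m, hm⟩ := hodd
        have haeq : a = a^n * (a^2)^(m+1) := by
          rw [← pow_mul, ← pow_add, show n + 2*(m+1) = 2*n+1 by omega, pow_succ, ha2n, one_mul]
        rw [haeq]
        exact mul_mem (Subgroup.mem_sup_left (Subgroup.subset_closure (Set.mem_insert _ _)))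
          (pow_mem ha2sup _)
      · rw [h]; exact hbsup
      · rw [h]; exact hcsup
    have hψinj : Function.Injective ψ := by
      refine (injective_iff_map_eq_one ψ).mpr ?_
      rintro ⟨z, w⟩ h1
      have h1' : (z : G) * (w : G) = 1 := h1
      have h2 : (z : G) = (w : G)⁻¹ := eq_inv_of_mul_eq_one_left h1'
      have h3 : (z : G) ∈ Zs ⊓ Ds :=
        Subgroup.mem_inf.mpr ⟨z.2, by rw [h2]; exact inv_mem w.2⟩
      rw [hZDbot, Subgroup.mem_bot] at h3
      have hz1 : z = 1 := Subtype.ext h3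
      have hw1 : w = 1 := by
        refine Subtype.ext ?_
        have h4 : ((w : G))⁻¹ = 1 := by rw [← h2, h3]
        simpa using h4
      rw [Prod.mk_eq_one]
      exact ⟨hz1, hw1⟩
    have hψsurj : Function.Surjective ψ := by
      intro g
      have hg : g ∈ ψ.range := by rw [hψrange, hZDtop]; trivial
      obtain ⟨p, hp⟩ := hg
      exact ⟨p, hp⟩
    have hcop : Nat.Coprime 2 n := Nat.coprime_two_left.mpr hodd
    have e2 : Multiplicative (ZMod 2) × Multiplicative (ZMod n) ≃* Multiplicative (ZMod (2*n)) :=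
      (((ZMod.chineseRemainder hcop).toAddEquiv.toMultiplicative).trans
        (MulEquiv.prodMultiplicative (G := ZMod 2) (H := ZMod n))).symm
    refine ⟨hZDbot, hZDtop, ⟨?_⟩⟩
    exact ((MulEquiv.ofBijective ψ ⟨hψinj, hψsurj⟩).symm.trans
      ((eZ.prodCongr eD).trans (e2.prodCongr (MulEquiv.refl _))))
  · -- even case
    have hveq : a^n * b^(n/2) = d^(n/2) := by
      rw [hdpow (n/2), show 2*(n/2) = n from by obtain ⟨m2, hm2⟩ := heven; omega]
    have hinf_eq : Zs ⊓ Ds = Subgroup.closure {a^n * b^(n/2)} := by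
      apply le_antisymm
      · intro x hx
        obtain ⟨k, rfl, hdvd⟩ := hinf x hx
        have h1 : ((n/2 : ℕ):ℤ) ∣ k := by
          obtain ⟨t, ht⟩ := hdvd
          refine ⟨t, ?_⟩
          have hnn : (n:ℕ) = 2*(n/2) := by obtain ⟨m2, hm2⟩ := heven; omega
          have h2 : ((n:ℕ):ℤ) = 2*((n/2:ℕ):ℤ) := by exact_mod_cast congrArg (Nat.cast (R := ℤ)) hnn
          have h3 : (2:ℤ)*k = 2*(((n/2:ℕ):ℤ)*t) := by rw [ht, h2]; ring
          exact mul_left_cancel₀ two_ne_zero h3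
        obtain ⟨t, rfl⟩ := h1
        rw [hveq]
        have h4 : d^((((n/2:ℕ)):ℤ)*t) = (d^(n/2))^t := by rw [zpow_mul, zpow_natCast]
        rw [h4]
        exact Subgroup.zpow_mem _ (Subgroup.subset_closure (Set.mem_singleton _)) t
      · rw [Subgroup.closure_le]
        intro g hg
        rw [Set.mem_singleton_iff] at hg
        rw [hg]
        refine Subgroup.mem_inf.mpr ⟨?_, ?_⟩
        · refine mul_mem (Subgroup.subset_closure (Set.mem_insert _ _)) ?_
          exact Subgroup.pow_mem _ (Subgroup.subset_closure
            (Set.mem_insert_of_mem _ (Set.mem_singleton _))) _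
        · rw [hveq]
          exact Subgroup.pow_mem _ (Subgroup.subset_closure (Set.mem_insert _ _)) _
    have hcardw : Nat.card (Subgroup.closure {a^n * b^(n/2)} : Subgroup G) = 2 := by
      rw [← Subgroup.zpowers_eq_closure, Nat.card_zpowers, hveq, orderOf_pow, horderd,
        Nat.gcd_eq_right (Nat.div_dvd_of_dvd (even_iff_two_dvd.mp heven))]
      have hnn : n = 2*(n/2) := by obtain ⟨m2, hm2⟩ := heven; omega
      have hq : 0 < n/2 := by omega
      rw [show n / (n/2) = 2*(n/2)/(n/2) from by rw [← hnn], Nat.mul_div_cancel _ hq]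
    have hkercard : Nat.card ψ.ker = 2 := by
      have e : ψ.ker ≃ (Zs ⊓ Ds : Subgroup G) :=
        { toFun := fun p => ⟨(p.1.1 : G), Subgroup.mem_inf.mpr ⟨p.1.1.2, by
            have hk : ((p.1.1 : G)) * ((p.1.2 : G)) = 1 := p.2
            have h2 : (p.1.1 : G) = ((p.1.2 : G))⁻¹ := eq_inv_of_mul_eq_one_left hk
            rw [h2]; exact inv_mem p.1.2.2⟩⟩
          invFun := fun x => ⟨(⟨(x:G), (Subgroup.mem_inf.mp x.2).1⟩,
              ⟨(x:G)⁻¹, inv_mem (Subgroup.mem_inf.mp x.2).2⟩), by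
            show ((x:G)) * ((x:G))⁻¹ = 1
            exact mul_inv_cancel _⟩
          left_inv := by
            rintro ⟨⟨z, w⟩, hp⟩
            have hk : ((z : G)) * ((w : G)) = 1 := hp
            have h2 : (w : G) = ((z:G))⁻¹ := eq_inv_of_mul_eq_one_right hk
            refine Subtype.ext ?_
            refine Prod.ext (Subtype.ext rfl) (Subtype.ext ?_)
            exact h2.symm
          right_inv := fun x => Subtype.ext rfl }
      rw [Nat.card_congr e, hinf_eq]
      exact hcardw
    have hcardprod : Nat.card (Zs × Ds) = 4*n^2 := by
      rw [Nat.card_prod, hcardZ, hcardD]; ring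
    have hcardsup : Nat.card (Zs ⊔ Ds : Subgroup G) = 2*n^2 := by
      have h1 := Subgroup.card_eq_card_quotient_mul_card_subgroup ψ.ker
      rw [Nat.card_congr (QuotientGroup.quotientKerEquivRange ψ).toEquiv] at h1
      rw [hcardprod, hkercard] at h1
      have h2 : Nat.card ψ.range * 2 = 2*n^2*2 := by rw [← h1]; ring
      have h3 : Nat.card ψ.range = 2*n^2 := Nat.eq_of_mul_eq_mul_right (by norm_num) h2
      rw [← hψrange]
      exact h3
    have h1 := Subgroup.card_mul_index (Zs ⊔ Ds)
    rw [hcardsup, hcard] at h1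
    have h2 : 2*n^2 * (Zs ⊔ Ds).index = 2*n^2 * 2 := by rw [h1]; ring
    refine ⟨hinf_eq, hcardw, ?_⟩
    exact Nat.eq_of_mul_eq_mul_left (by positivity) h2
end
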